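/- arXiv:2403.00471 — 2 statements merged into one kernel-verified Lean document; each statement's English description precedes it below -/
import Mathlib

section
/- For every b with 0 ≤ b < bmax, F(b, iss) > 0; i.e., evaluated at the complete-markets rate iss = (1−β)/β, the natural-rate equation residual is strictly positive whenever the government-debt level lies strictly below the debt bound. -/
/-- High-productivity stationary consumption denominator:
Dh(b,r) = w·zh + (1−β)·(1+r)·b·(1−zh) with w = (ε−1)/ε. -/
noncomputable def Dh (β ε zh : ℝ) (b r : ℝ) : ℝ :=
  ((ε - 1) / ε) * zh + (1 - β) * (1 + r) * b * (1 - zh)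

/-- Low-productivity stationary consumption denominator:
Dl(b,r) = w·zl + (1−β)·(1+r)·b·(1−zl) with w = (ε−1)/ε. -/
noncomputable def Dl (β ε zl : ℝ) (b r : ℝ) : ℝ :=
  ((ε - 1) / ε) * zl + (1 - β) * (1 + r) * b * (1 - zl)

/-- Natural-rate equation residual:
F(b,r) = β·ρ·(1+r)/Dh(b,r) + β·(1−ρ)·(1+r)/Dl(b,r) − ε/(ε−1). -/
noncomputable def F (β ε ρ zh zl : ℝ) (b r : ℝ) : ℝ :=
  β * ρ * (1 + r) / Dh β ε zh b r
    + β * (1 - ρ) * (1 + r) / Dl β ε zl b r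
    - ε / (ε - 1)

/-!
At `r = (1 - β) / β` we have `β (1 + r) = 1`, so with `w = (ε - 1) / ε` and
`k = (1 - β) b / β` the residual is `ρ / A + (1 - ρ) / B - 1 / w`, where
`A = k + (w - k) zh` and `B = k + (w - k) zl`. The mean condition on the productivities
gives `ρ A + (1 - ρ) B = w`, and `b < bmax` means `0 ≤ k < w`, so `A, B > 0` and
`A ≠ B`. Strict convexity of `x ↦ x⁻¹` (Jensen) then makes the residual positive.
-/

theorem inv_weighted_mean_lt {ρ A B : ℝ} (hρ0 : 0 < ρ) (hρ1 : ρ < 1)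
    (hA : 0 < A) (hB : 0 < B) (hAB : A ≠ B) :
    (ρ * A + (1 - ρ) * B)⁻¹ < ρ / A + (1 - ρ) / B := by
  have h := (strictConvexOn_zpow (m := -1) (by decide) (by decide)).2 hA hB hAB
    hρ0 (sub_pos.2 hρ1) (add_sub_cancel ρ 1)
  simpa only [smul_eq_mul, zpow_neg_one, div_eq_mul_inv] using h

section AtCompleteMarketsRate

variable {β ε : ℝ}

theorem Dh_completeMarketsRate (hβ : β ≠ 0) (z b : ℝ) :
    Dh β ε z b ((1 - β) / β) =
      (1 - β) / β * b + ((ε - 1) / ε - (1 - β) / β * b) * z := by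
  rw [Dh]
  field_simp
  ring

theorem Dl_completeMarketsRate (hβ : β ≠ 0) (z b : ℝ) :
    Dl β ε z b ((1 - β) / β) =
      (1 - β) / β * b + ((ε - 1) / ε - (1 - β) / β * b) * z :=
  Dh_completeMarketsRate hβ z b

theorem F_completeMarketsRate (hβ : β ≠ 0) (ρ zh zl b : ℝ) :
    F β ε ρ zh zl b ((1 - β) / β) =
      ρ / Dh β ε zh b ((1 - β) / β) + (1 - ρ) / Dl β ε zl b ((1 - β) / β)
        - ((ε - 1) / ε)⁻¹ := by
  have hβr : β * (1 + (1 - β) / β) = 1 := by field_simp; ring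
  rw [F, inv_div, mul_right_comm β ρ, mul_right_comm β (1 - ρ), hβr, one_mul, one_mul]

end AtCompleteMarketsRate

theorem stmt_11_general (β ε ρ zh zl : ℝ)
    (hβ0 : 0 < β) (hβ1 : β < 1)
    (hρ0 : 0 < ρ) (hρ1 : ρ < 1)
    (hzl0 : 0 < zl) (hzh : 1 < zh)
    (hmean : ρ * zh + (1 - ρ) * zl = 1) :
    ∀ b : ℝ, 0 ≤ b → b < ((ε - 1) / ε) * (β / (1 - β)) →
      F β ε ρ zh zl b ((1 - β) / β) > 0 := by
  intro b hb hbmax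
  rw [F_completeMarketsRate hβ0.ne', Dh_completeMarketsRate hβ0.ne',
    Dl_completeMarketsRate hβ0.ne', gt_iff_lt, sub_pos]
  set w := (ε - 1) / ε
  set k := (1 - β) / β * b
  have hk : 0 ≤ k := by positivity
  have hkw : k < w := by
    calc k < (1 - β) / β * (w * (β / (1 - β))) :=
          mul_lt_mul_of_pos_left hbmax (div_pos (by linarith) hβ0)
      _ = w := by field_simp [(sub_pos.2 hβ1).ne']
  have hzhl : zh ≠ zl := fun h => by
    rw [h, ← add_mul, add_sub_cancel, one_mul] at hmean
    linarith
  have hmix : ρ * (k + (w - k) * zh) + (1 - ρ) * (k + (w - k) * zl) = w := by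
    linear_combination (w - k) * hmean
  have hwk : 0 < w - k := sub_pos.2 hkw
  have hne : k + (w - k) * zh ≠ k + (w - k) * zl := fun h =>
    hzhl (mul_left_cancel₀ hwk.ne' (add_left_cancel h))
  have h := inv_weighted_mean_lt hρ0 hρ1 (by positivity) (by positivity) hne
  rwa [hmix] at h

/-- Evaluated at the complete-markets rate iss = (1−β)/β, the natural-rate
equation residual is strictly positive whenever the debt level lies strictly
below the debt bound bmax. -/
theorem stmt_11 (β ε ρ zh zl : ℝ)
    (hβ0 : 0 < β) (hβ1 : β < 1) (hε : 1 < ε)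
    (hρ0 : 0 < ρ) (hρ1 : ρ < 1)
    (hzl0 : 0 < zl) (hzl1 : zl < 1) (hzh : 1 < zh)
    (hmean : ρ * zh + (1 - ρ) * zl = 1) :
    ∀ b : ℝ, 0 ≤ b → b < ((ε - 1) / ε) * (β / (1 - β)) →
      F β ε ρ zh zl b ((1 - β) / β) > 0 :=
  stmt_11_general β ε ρ zh zl hβ0 hβ1 hρ0 hρ1 hzl0 hzh hmean
end

section
/- The natural rate of interest is strictly increasing in the level of government debt (Proposition 3, derivative form): let 0 ≤ b̄ < bmax and let g : ℝ → ℝ be differentiable at b̄; suppose there is an open interval U containing b̄ such that for all b ∈ U one has g(b) > −1, Dh(b, g(b)) > 0, Dl(b, g(b)) > 0 and F(b, g(b)) = 0. Then the derivative of g at b̄ is strictly positive. -/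
section NaturalRate

variable {β ε ρ zh zl : ℝ}

theorem mean_Dh_Dl (hmean : ρ * zh + (1 - ρ) * zl = 1) (b r : ℝ) :
    ρ * Dh β ε zh b r + (1 - ρ) * Dl β ε zl b r = (ε - 1) / ε := by
  unfold Dh Dl
  linear_combination ((ε - 1) / ε - (1 - β) * (1 + r) * b) * hmean

/-- Since `ρ Dh + (1 - ρ) Dl = w`, the harmonic–arithmetic mean inequality gives
`ρ / Dh + (1 - ρ) / Dl ≥ 1 / w = ε / (ε - 1)`, and `F = 0` says that `β (1 + r)` times the left
side equals `ε / (ε - 1)`. -/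
theorem mul_one_add_le_one_of_F_eq_zero (hρ0 : 0 < ρ) (hρ1 : ρ < 1)
    (hmean : ρ * zh + (1 - ρ) * zl = 1) {b r : ℝ}
    (hDh : 0 < Dh β ε zh b r) (hDl : 0 < Dl β ε zl b r) (hF : F β ε ρ zh zl b r = 0) :
    β * (1 + r) ≤ 1 := by
  set A := Dh β ε zh b r
  set B := Dl β ε zl b r
  have hharm : (ρ * A + (1 - ρ) * B)⁻¹ ≤ ρ * A⁻¹ + (1 - ρ) * B⁻¹ := by
    simpa only [smul_eq_mul, zpow_neg_one] using
      (convexOn_zpow (-1)).2 (Set.mem_Ioi.2 hDh) (Set.mem_Ioi.2 hDl) hρ0.le (by linarith)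
        (by ring)
  rw [mean_Dh_Dl hmean, inv_div] at hharm
  have hS : 0 < ρ * A⁻¹ + (1 - ρ) * B⁻¹ := by
    have : 0 < 1 - ρ := by linarith
    positivity
  have hrate : β * (1 + r) * (ρ * A⁻¹ + (1 - ρ) * B⁻¹) = ε / (ε - 1) := by
    unfold F at hF
    linear_combination hF
  nlinarith

theorem Dl_lt_Dh (hβ0 : 0 < β) (hβ1 : β < 1) (hzh : 1 < zh) (hρ1 : ρ < 1)
    (hmean : ρ * zh + (1 - ρ) * zl = 1) {b r : ℝ} (hb0 : 0 ≤ b)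
    (hb1 : b < ((ε - 1) / ε) * (β / (1 - β))) (hr : β * (1 + r) ≤ 1) :
    Dl β ε zl b r < Dh β ε zh b r := by
  have h1β : 0 < 1 - β := by linarith
  have hzl : zl < zh := by nlinarith
  have hb1' : (1 - β) * b < (ε - 1) / ε * β := by
    rwa [← mul_div_assoc, lt_div_iff₀ h1β, mul_comm b] at hb1
  have hc : (1 - β) * (1 + r) * b < (ε - 1) / ε := by
    nlinarith [mul_nonneg (mul_nonneg h1β.le hb0) (sub_nonneg.2 hr)]
  have hgap : Dh β ε zh b r - Dl β ε zl b r
      = ((ε - 1) / ε - (1 - β) * (1 + r) * b) * (zh - zl) := by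
    unfold Dh Dl; ring
  nlinarith [mul_pos (sub_pos.2 hc) (sub_pos.2 hzl)]

/-- With `R = 1 + g`, the terms `R' · R b (1 - z)` of the quotient rule cancel. -/
theorem hasDerivAt_one_add_div_Dh {z : ℝ} {g : ℝ → ℝ} {g' b : ℝ} (hg : HasDerivAt g g' b)
    (hD : Dh β ε z b (g b) ≠ 0) :
    HasDerivAt (fun x ↦ (1 + g x) / Dh β ε z x (g x))
      ((g' * ((ε - 1) / ε) * z - (1 - β) * (1 + g b) ^ 2 * (1 - z)) / Dh β ε z b (g b) ^ 2) b := by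
  have hR := hg.const_add 1
  have hD' := ((hR.const_mul (1 - β)).mul (hasDerivAt_id b)).mul_const (1 - z)
    |>.const_add ((ε - 1) / ε * z)
  refine ((hR.div hD' hD).congr_deriv ?_).congr_of_eventuallyEq (.of_forall fun x ↦ ?_)
  · simp only [Pi.mul_apply, Dh, id]
    ring
  · simp only [Pi.div_apply, Pi.mul_apply, Dh, id]

theorem hasDerivAt_F_comp {g : ℝ → ℝ} {g' b : ℝ} (hg : HasDerivAt g g' b)
    (hDh : Dh β ε zh b (g b) ≠ 0) (hDl : Dl β ε zl b (g b) ≠ 0) :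
    HasDerivAt (fun x ↦ F β ε ρ zh zl x (g x))
      (β * ρ * ((g' * ((ε - 1) / ε) * zh - (1 - β) * (1 + g b) ^ 2 * (1 - zh))
          / Dh β ε zh b (g b) ^ 2)
        + β * (1 - ρ) * ((g' * ((ε - 1) / ε) * zl - (1 - β) * (1 + g b) ^ 2 * (1 - zl))
          / Dl β ε zl b (g b) ^ 2)) b := by
  have hh := (hasDerivAt_one_add_div_Dh (β := β) (ε := ε) hg hDh).const_mul (β * ρ)
  have hl := (hasDerivAt_one_add_div_Dh (β := β) (ε := ε) hg hDl).const_mul (β * (1 - ρ))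
  refine ((hh.add hl).sub_const (ε / (ε - 1))).congr_of_eventuallyEq (.of_forall fun x ↦ ?_)
  simp only [F, Dl, Dh, Pi.add_apply, mul_div_assoc]

/-- By `hmean`, `ρ (1 - zh) = -(1 - ρ) (1 - zl)`, so the `b`-terms of the two quotients combine
into a positive multiple of `1 / B ^ 2 - 1 / A ^ 2`. -/
theorem pos_of_weighted_quotient_derivs_eq_zero (hβ0 : 0 < β) (hβ1 : β < 1) (hε : 1 < ε)
    (hρ0 : 0 < ρ) (hρ1 : ρ < 1) (hzl0 : 0 < zl) (hzh : 1 < zh)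
    (hmean : ρ * zh + (1 - ρ) * zl = 1) {A B R d : ℝ} (hB : 0 < B) (hBA : B < A) (hR : 0 < R)
    (h : β * ρ * ((d * ((ε - 1) / ε) * zh - (1 - β) * R ^ 2 * (1 - zh)) / A ^ 2)
      + β * (1 - ρ) * ((d * ((ε - 1) / ε) * zl - (1 - β) * R ^ 2 * (1 - zl)) / B ^ 2) = 0) :
    0 < d := by
  have hsplit : d * (β * ((ε - 1) / ε) * (ρ * zh / A ^ 2 + (1 - ρ) * zl / B ^ 2))
      = β * (1 - β) * R ^ 2 * ρ * (zh - 1) * (1 / B ^ 2 - 1 / A ^ 2) := by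
    linear_combination h - β * (1 - β) * R ^ 2 / B ^ 2 * hmean
  have hinv : 1 / A ^ 2 < 1 / B ^ 2 :=
    one_div_lt_one_div_of_lt (by positivity) (pow_lt_pow_left₀ hBA hB.le two_ne_zero)
  have hε0 : 0 < ε - 1 := by linarith
  have hρ1' : 0 < 1 - ρ := by linarith
  have hzh1 : 0 < zh - 1 := by linarith
  have hβ1' : 0 < 1 - β := by linarith
  have hgap := sub_pos.2 hinv
  have hpos : 0 < β * (1 - β) * R ^ 2 * ρ * (zh - 1) * (1 / B ^ 2 - 1 / A ^ 2) := by
    positivity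
  rw [← hsplit] at hpos
  exact pos_of_mul_pos_left hpos (by positivity)

end NaturalRate

theorem stmt_15_general (β ε ρ zh zl : ℝ)
    (hβ0 : 0 < β) (hβ1 : β < 1) (hε : 1 < ε)
    (hρ0 : 0 < ρ) (hρ1 : ρ < 1)
    (hzl0 : 0 < zl) (hzh : 1 < zh)
    (hmean : ρ * zh + (1 - ρ) * zl = 1)
    (bbar : ℝ) (hb0 : 0 ≤ bbar)
    (hb1 : bbar < ((ε - 1) / ε) * (β / (1 - β)))
    (g : ℝ → ℝ) (hg : DifferentiableAt ℝ g bbar)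
    (lo hi : ℝ) (hlo : lo < bbar) (hhi : bbar < hi)
    (hsol : ∀ b ∈ Set.Ioo lo hi,
      g b > -1 ∧ Dh β ε zh b (g b) > 0 ∧ Dl β ε zl b (g b) > 0 ∧
      F β ε ρ zh zl b (g b) = 0) :
    0 < deriv g bbar := by
  obtain ⟨hr, hDh, hDl, hF⟩ := hsol bbar ⟨hlo, hhi⟩
  have hDl_lt_Dh := Dl_lt_Dh hβ0 hβ1 hzh hρ1 hmean hb0 hb1
    (mul_one_add_le_one_of_F_eq_zero hρ0 hρ1 hmean hDh hDl hF)
  have hconst : HasDerivAt (fun b ↦ F β ε ρ zh zl b (g b)) 0 bbar :=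
    (hasDerivAt_const bbar 0).congr_of_eventuallyEq <|
      Filter.eventually_of_mem (Ioo_mem_nhds hlo hhi) fun b hb ↦ (hsol b hb).2.2.2
  have hderiv := (hasDerivAt_F_comp hg.hasDerivAt hDh.ne' hDl.ne').unique hconst
  exact pos_of_weighted_quotient_derivs_eq_zero hβ0 hβ1 hε hρ0 hρ1 hzl0 hzh hmean hDl hDl_lt_Dh
    (by linarith) hderiv

/-- Proposition 3 (derivative form): if g locally solves the natural-rate
equation F(b, g(b)) = 0 on an open interval around b̄ ∈ [0, bmax), with g(b)
> −1 and positive denominators, and g is differentiable at b̄, then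
g'(b̄) > 0. -/
theorem stmt_15 (β ε ρ zh zl : ℝ)
    (hβ0 : 0 < β) (hβ1 : β < 1) (hε : 1 < ε)
    (hρ0 : 0 < ρ) (hρ1 : ρ < 1)
    (hzl0 : 0 < zl) (hzl1 : zl < 1) (hzh : 1 < zh)
    (hmean : ρ * zh + (1 - ρ) * zl = 1)
    (bbar : ℝ) (hb0 : 0 ≤ bbar)
    (hb1 : bbar < ((ε - 1) / ε) * (β / (1 - β)))
    (g : ℝ → ℝ) (hg : DifferentiableAt ℝ g bbar)
    (lo hi : ℝ) (hlo : lo < bbar) (hhi : bbar < hi)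
    (hsol : ∀ b ∈ Set.Ioo lo hi,
      g b > -1 ∧ Dh β ε zh b (g b) > 0 ∧ Dl β ε zl b (g b) > 0 ∧
      F β ε ρ zh zl b (g b) = 0) :
    0 < deriv g bbar :=
  stmt_15_general β ε ρ zh zl hβ0 hβ1 hε hρ0 hρ1 hzl0 hzh hmean bbar hb0 hb1 g hg lo hi hlo hhi hsol
end
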